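/- Let n ≥ 2 and let W be a unitary matrix on ℂ² ⊗ ℂ^{2^{n−1}} (qubit A₁ together with the remaining n−1 qubits). Define the channel E₁ on 2×2 matrices by E₁(ρ) := Tr_B[ W (ρ ⊗ I_{2^{n−1}}/2^{n−1}) W† ], where Tr_B is the partial trace over the second factor. If E₁(ρ) = ρ for every 2×2 matrix ρ, then there exists a unitary W' on ℂ^{2^{n−1}} such that W = I₂ ⊗ W'. -/

import Mathlib

/-!
Evaluating the channel on the matrix units `single s t 1` shows that the `m × m` blocks
`W_{as} := W.submatrix (Prod.mk a) (Prod.mk s)` are Hilbert–Schmidt orthogonal: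
`tr (W_{as} W_{bt}ᴴ) = m` if `s = a` and `t = b`, and `0` otherwise. So the off-diagonal blocks
have zero Hilbert–Schmidt norm, and `‖W_{aa} - W_{bb}‖² = m - m - m + m = 0`; hence
`W = 1 ⊗ W_{00}`, and unitarity of `W` passes to `W_{00}`.
-/

open Matrix Kronecker

noncomputable section

/-- The channel `E₁(ρ) = Tr_B[ W (ρ ⊗ I_m/m) W† ]` on one-qubit matrices, for a unitary
`W` on `ℂ² ⊗ ℂ^m`, written out entrywise. -/
def E1 (m : ℕ) (W : Matrix (Fin 2 × Fin m) (Fin 2 × Fin m) ℂ)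
    (ρ : Matrix (Fin 2) (Fin 2) ℂ) : Matrix (Fin 2) (Fin 2) ℂ :=
  Matrix.of fun a b =>
    (1 / m : ℂ) * ∑ k : Fin m, ∑ s : Fin 2, ∑ t : Fin 2, ∑ l : Fin m,
      W (a, k) (s, l) * ρ s t * star (W (b, k) (t, l))

namespace Matrix

variable {ι κ R : Type*} [DecidableEq ι]

theorem eq_one_kronecker_of_submatrix_prodMk [MulZeroOneClass R]
    {W : Matrix (ι × κ) (ι × κ) R} {B : Matrix κ κ R}
    (h_offdiag : ∀ a s, a ≠ s → W.submatrix (Prod.mk a) (Prod.mk s) = 0)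
    (h_diag : ∀ a, W.submatrix (Prod.mk a) (Prod.mk a) = B) :
    W = 1 ⊗ₖ B := by
  ext ⟨a, k⟩ ⟨s, l⟩
  rw [kronecker_apply, one_apply]
  split_ifs with has
  · subst has
    simpa using congr_fun₂ (h_diag a) k l
  · rw [zero_mul]
    simpa using congr_fun₂ (h_offdiag a s has) k l

theorem mem_unitaryGroup_of_one_kronecker_mem [Fintype ι] [Fintype κ] [DecidableEq κ]
    [CommRing R] [StarRing R] [Nonempty ι]
    {B : Matrix κ κ R} (h : (1 : Matrix ι ι R) ⊗ₖ B ∈ unitaryGroup (ι × κ) R) :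
    B ∈ unitaryGroup κ R := by
  rw [mem_unitaryGroup_iff] at h ⊢
  rw [star_eq_conjTranspose, conjTranspose_kronecker, conjTranspose_one, ← mul_kronecker_mul,
    one_mul, ← one_kronecker_one] at h
  obtain ⟨i⟩ := ‹Nonempty ι›
  ext k l
  simpa [star_eq_conjTranspose] using congr_fun₂ h (i, k) (i, l)

end Matrix

section E1

open scoped ComplexOrder

theorem E1_single_apply (m : ℕ) (W : Matrix (Fin 2 × Fin m) (Fin 2 × Fin m) ℂ)
    (s t a b : Fin 2) :
    E1 m W (single s t 1) a b =
      (1 / m : ℂ) * trace (W.submatrix (Prod.mk a) (Prod.mk s) *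
        (W.submatrix (Prod.mk b) (Prod.mk t))ᴴ) := by
  simp only [E1, of_apply, trace, diag, mul_apply, submatrix_apply, conjTranspose_apply,
    single_apply, ite_and, mul_ite, ite_mul, mul_one, mul_zero, zero_mul, Finset.sum_ite_eq,
    Finset.sum_ite_irrel, Finset.mem_univ, if_true, Finset.sum_const_zero]

variable {m : ℕ} {W : Matrix (Fin 2 × Fin m) (Fin 2 × Fin m) ℂ}

theorem trace_submatrix_mul_conjTranspose_of_E1_eq_self [NeZero m]
    (h : ∀ ρ, E1 m W ρ = ρ) (a s b t : Fin 2) :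
    trace (W.submatrix (Prod.mk a) (Prod.mk s) * (W.submatrix (Prod.mk b) (Prod.mk t))ᴴ) =
      if s = a ∧ t = b then (m : ℂ) else 0 := by
  have hE := E1_single_apply m W s t a b
  rw [h, single_apply, eq_comm, one_div, inv_mul_eq_iff_eq_mul₀ (NeZero.ne (m : ℂ))] at hE
  rw [hE, mul_ite, mul_one, mul_zero]

theorem submatrix_eq_zero_of_E1_eq_self [NeZero m] (h : ∀ ρ, E1 m W ρ = ρ) {a s : Fin 2}
    (has : a ≠ s) : W.submatrix (Prod.mk a) (Prod.mk s) = 0 := by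
  rw [← trace_mul_conjTranspose_self_eq_zero_iff,
    trace_submatrix_mul_conjTranspose_of_E1_eq_self h, if_neg (by tauto)]

theorem submatrix_diag_eq_of_E1_eq_self [NeZero m] (h : ∀ ρ, E1 m W ρ = ρ) (a b : Fin 2) :
    W.submatrix (Prod.mk a) (Prod.mk a) = W.submatrix (Prod.mk b) (Prod.mk b) := by
  rw [← sub_eq_zero, ← trace_mul_conjTranspose_self_eq_zero_iff]
  simp only [conjTranspose_sub, sub_mul, mul_sub, trace_sub,
    trace_submatrix_mul_conjTranspose_of_E1_eq_self h, and_self, if_true, sub_self]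

theorem eq_one_kronecker_of_E1_eq_self [NeZero m] (h : ∀ ρ, E1 m W ρ = ρ) :
    W = 1 ⊗ₖ W.submatrix (Prod.mk 0) (Prod.mk 0) :=
  eq_one_kronecker_of_submatrix_prodMk (fun _ _ => submatrix_eq_zero_of_E1_eq_self h)
    (fun a => submatrix_diag_eq_of_E1_eq_self h a 0)

end E1

theorem stmt8 (n : ℕ)
    (W : Matrix (Fin 2 × Fin (2 ^ (n - 1))) (Fin 2 × Fin (2 ^ (n - 1))) ℂ)
    (hW : W ∈ Matrix.unitaryGroup (Fin 2 × Fin (2 ^ (n - 1))) ℂ)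
    (h : ∀ ρ : Matrix (Fin 2) (Fin 2) ℂ, E1 (2 ^ (n - 1)) W ρ = ρ) :
    ∃ W' : Matrix (Fin (2 ^ (n - 1))) (Fin (2 ^ (n - 1))) ℂ,
      W' ∈ Matrix.unitaryGroup (Fin (2 ^ (n - 1))) ℂ ∧
      W = (1 : Matrix (Fin 2) (Fin 2) ℂ) ⊗ₖ W' := by
  have hW' := eq_one_kronecker_of_E1_eq_self h
  exact ⟨_, mem_unitaryGroup_of_one_kronecker_mem (hW' ▸ hW), hW'⟩

end
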